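/- arXiv:0905.4068 — 5 statements merged into one kernel-verified Lean document; each statement's English description precedes it below -/
import Mathlib

section
/- For every time step t, every oblivious schedule O_t, and every clairvoyant schedule C_t, there exists a clairvoyant schedule C*_t (for the same step t) such that every packet j occurring in C*_t with r_j ≤ t also occurs in O_t. -/
/-- Packet `j` is pending at step `t`: released by `t` and not yet expired. -/
def Pending {P : Type*} (r d : P → ℕ) (t : ℕ) (j : P) : Prop :=
  r j ≤ t ∧ t < d j

/-- Packet `j` occurs in (is scheduled by) the schedule `S`. -/
def Occurs {P : Type*} (S : ℕ → Option P) (j : P) : Prop :=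
  ∃ t', S t' = some j

/-- A feasible schedule starting at step `t` over the packet set `A`:
a partial map from steps `{t, t+1, …}` to `A`, injective on its domain,
scheduling packets only while they are pending. -/
def FeasibleSchedule {P : Type*} (r d : P → ℕ) (t : ℕ) (A : Set P)
    (S : ℕ → Option P) : Prop :=
  (∀ t' < t, S t' = none) ∧
  (∀ t₁ t₂ j, S t₁ = some j → S t₂ = some j → t₁ = t₂) ∧
  (∀ t' j, S t' = some j → j ∈ A ∧ r j ≤ t' ∧ t' < d j)

open Classical in
/-- The weight of a schedule: total weight of the scheduled packets. -/
noncomputable def schedWeight {P : Type*} [Fintype P] (w : P → ℝ)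
    (S : ℕ → Option P) : ℝ :=
  ∑ j : P, if Occurs S j then w j else 0

/-- An optimal feasible schedule starting at `t` over `A`. -/
def OptimalSchedule {P : Type*} [Fintype P] (r d : P → ℕ) (w : P → ℝ) (t : ℕ)
    (A : Set P) (S : ℕ → Option P) : Prop :=
  FeasibleSchedule r d t A S ∧
  ∀ S', FeasibleSchedule r d t A S' → schedWeight w S' ≤ schedWeight w S

/-- Compatibility of the linear order `⊴` (here `le`) with deadlines,
weights and release times. -/
def OrderCompatible {P : Type*} (r d : P → ℕ) (w : P → ℝ)
    (le : P → P → Prop) : Prop :=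
  (∀ i j, d i < d j → le i j) ∧
  (∀ i j, d i = d j → w j < w i → le i j) ∧
  (∀ i j, d i = d j → w i = w j → r i < r j → le i j)

/-- `S` is a `⊴`-schedule over `A`: whenever `S` schedules a packet, that packet is
the `⊴`-minimum of the packets of `A` pending at that step and not scheduled earlier. -/
def TriSchedule {P : Type*} (r d : P → ℕ) (le : P → P → Prop) (A : Set P)
    (S : ℕ → Option P) : Prop :=
  ∀ t' j, S t' = some j →
    ∀ k ∈ A, Pending r d t' k → (∀ u < t', S u ≠ some k) → le j k

/-- The set of packets pending at step `t`. -/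
def PendingSet {P : Type*} (r d : P → ℕ) (t : ℕ) : Set P :=
  {j | Pending r d t j}

/-- The packets pending at `t` together with all packets released after `t`. -/
def ClairSet {P : Type*} (r d : P → ℕ) (t : ℕ) : Set P :=
  {j | Pending r d t j ∨ t < r j}

/-- An oblivious schedule at step `t`: an optimal feasible `⊴`-schedule
starting at `t` over the packets pending at `t`. -/
def ObliviousSchedule {P : Type*} [Fintype P] (r d : P → ℕ) (w : P → ℝ)
    (le : P → P → Prop) (t : ℕ) (O : ℕ → Option P) : Prop :=
  OptimalSchedule r d w t (PendingSet r d t) O ∧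
  TriSchedule r d le (PendingSet r d t) O

/-- A clairvoyant schedule at step `t`: an optimal feasible schedule starting at `t`
over the packets pending at `t` together with all packets released after `t`. -/
def ClairvoyantSchedule {P : Type*} [Fintype P] (r d : P → ℕ) (w : P → ℝ)
    (t : ℕ) (C : ℕ → Option P) : Prop :=
  OptimalSchedule r d w t (ClairSet r d t) C

/-- A clairvoyant schedule `C` conforms with an oblivious schedule `O` at step `t`. -/
def Conforms {P : Type*} (r d : P → ℕ) (w : P → ℝ) (le : P → P → Prop)
    (t : ℕ) (O C : ℕ → Option P) : Prop :=
  TriSchedule r d le (ClairSet r d t) C ∧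
  (∀ j, Occurs C j → r j ≤ t → Occurs O j) ∧
  (∀ jt, C t = some jt → ∀ i, Occurs O i → le i jt → i ≠ jt → w i < w jt)


/-!
By Hall's theorem, a set of packets fits into a set `T` of slots iff for every `D` at most as
many of its packets have deadline `≤ D` as `T` has slots below `D`. The oblivious schedule `O`
fits a maximum-weight set `B` of pending packets into the slots from `t` on, and the clairvoyant
schedule `C` fits its packets released by `t` into the slots `T'` it does not spend on later
packets. Among the maximum-weight sets of pending packets fitting into `T'`, take `Y` sharing
the most packets with `B`. A packet `x ∈ Y \ B` would yield, by counting at tight deadlines, a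
packet `b ∈ B \ Y` that can be swapped with `x` in both sets, against the optimality of `B` or
the choice of `Y`. Hence `Y ⊆ B`, and `C*` puts `Y` into the slots `T'`, keeping the rest of `C`.
-/

open Finset Classical

section Slots

variable {P : Type*} (d : P → ℕ)

def Schedulable (T : Set ℕ) (Z : Finset P) : Prop :=
  ∃ σ : P → ℕ, Set.InjOn σ Z ∧ ∀ z ∈ Z, σ z ∈ T ∧ σ z < d z

noncomputable def dueBy (Z : Finset P) (D : ℕ) : ℕ := #{z ∈ Z | d z ≤ D}

noncomputable def slotsBelow (T : Set ℕ) (D : ℕ) : ℕ := #{s ∈ range D | s ∈ T}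

variable {d} {T T' : Set ℕ} {Z : Finset P}

theorem Schedulable.mono (h : Schedulable d T Z) (hT : T ⊆ T') : Schedulable d T' Z := by
  obtain ⟨σ, hinj, hσ⟩ := h
  exact ⟨σ, hinj, fun z hz => ⟨hT (hσ z hz).1, (hσ z hz).2⟩⟩

theorem Schedulable.dueBy_le (h : Schedulable d T Z) (D : ℕ) :
    dueBy d Z D ≤ slotsBelow T D := by
  obtain ⟨σ, hinj, hσ⟩ := h
  refine card_le_card_of_injOn σ (fun z hz => ?_) (hinj.mono fun z hz => (mem_filter.1 hz).1)
  obtain ⟨hzZ, hzD⟩ := mem_filter.1 hz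
  exact mem_filter.2 ⟨mem_range.2 ((hσ z hzZ).2.trans_le hzD), (hσ z hzZ).1⟩

/-- Hall's theorem for deadline windows: the union of the windows of a set of packets is the
window of its latest deadline. -/
theorem schedulable_of_forall_dueBy_le (h : ∀ D, dueBy d Z D ≤ slotsBelow T D) :
    Schedulable d T Z := by
  let window : Z → Finset ℕ := fun z => {s ∈ range (d z) | s ∈ T}
  obtain ⟨f, hf, hfw⟩ : ∃ f : Z → ℕ, Function.Injective f ∧ ∀ z, f z ∈ window z := by
    refine (all_card_le_biUnion_card_iff_exists_injective window).1 fun S => ?_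
    rcases S.eq_empty_or_nonempty with rfl | hS
    · simp
    obtain ⟨z₀, hz₀, hmax⟩ := S.exists_max_image (fun z => d z) hS
    calc #S ≤ dueBy d Z (d z₀) :=
          card_le_card_of_injOn Subtype.val
            (fun z hz => mem_filter.2 ⟨z.2, hmax z hz⟩) Subtype.val_injective.injOn
      _ ≤ #(window z₀) := h _
      _ ≤ #(S.biUnion window) := card_le_card (subset_biUnion_of_mem window hz₀)
  refine ⟨fun x => if hx : x ∈ Z then f ⟨x, hx⟩ else 0, fun x hx y hy hxy => ?_, fun z hz => ?_⟩
  · simp only [mem_coe] at hx hy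
    simp only [dif_pos hx, dif_pos hy] at hxy
    exact congrArg Subtype.val (hf hxy)
  · simp only [dif_pos hz]
    obtain ⟨hlt, hT⟩ := mem_filter.1 (hfw ⟨z, hz⟩)
    exact ⟨hT, mem_range.1 hlt⟩

theorem dueBy_insert {x : P} (hx : x ∉ Z) (D : ℕ) :
    dueBy d (insert x Z) D = dueBy d Z D + if d x ≤ D then 1 else 0 := by
  unfold dueBy
  rw [filter_insert]
  split_ifs
  · exact card_insert_of_notMem fun h => hx (mem_filter.1 h).1
  · rfl

theorem dueBy_erase_add {x : P} (hx : x ∈ Z) (D : ℕ) :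
    dueBy d (Z.erase x) D + (if d x ≤ D then 1 else 0) = dueBy d Z D := by
  unfold dueBy
  rw [filter_erase]
  split_ifs with h
  · exact card_erase_add_one (mem_filter.2 ⟨hx, h⟩)
  · rw [erase_eq_of_notMem (by simp [h]), add_zero]

theorem dueBy_add {D₁ D₂ : ℕ} (h : D₁ ≤ D₂) :
    dueBy d Z D₂ = dueBy d Z D₁ + #{z ∈ Z | D₁ < d z ∧ d z ≤ D₂} := by
  unfold dueBy
  rw [← card_union_of_disjoint (disjoint_filter.2 fun _ _ h₁ h₂ => by omega), ← filter_or]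
  exact congrArg card (filter_congr fun z _ => by omega)

theorem slotsBelow_add {D₁ D₂ : ℕ} (h : D₁ ≤ D₂) :
    slotsBelow T D₂ = slotsBelow T D₁ + #{s ∈ Ico D₁ D₂ | s ∈ T} := by
  unfold slotsBelow
  rw [range_eq_Ico, range_eq_Ico, ← Ico_union_Ico_eq_Ico (Nat.zero_le _) h, filter_union,
    card_union_of_disjoint (disjoint_filter_filter (Ico_disjoint_Ico_consecutive _ _ _))]

theorem slotsBelow_add_le_of_subset (hT : T' ⊆ T) {D₁ D₂ : ℕ} (h : D₁ ≤ D₂) :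
    slotsBelow T' D₂ + slotsBelow T D₁ ≤ slotsBelow T' D₁ + slotsBelow T D₂ := by
  rw [slotsBelow_add h, slotsBelow_add (T := T) h]
  have : #{s ∈ Ico D₁ D₂ | s ∈ T'} ≤ #{s ∈ Ico D₁ D₂ | s ∈ T} :=
    card_le_card (monotone_filter_right _ fun s _ => @hT s)
  omega

theorem Schedulable.insert_of_forall_dueBy_lt {x : P} (hZ : Schedulable d T Z) (hx : x ∉ Z)
    (h : ∀ D, d x ≤ D → dueBy d Z D < slotsBelow T D) : Schedulable d T (insert x Z) := by
  refine schedulable_of_forall_dueBy_le fun D => ?_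
  rw [dueBy_insert hx]
  split_ifs with hD
  · exact h D hD
  · exact hZ.dueBy_le D

theorem Schedulable.exchange_of_forall_dueBy_lt {x b : P} (hZ : Schedulable d T Z) (hx : x ∈ Z)
    (hb : b ∉ Z)
    (h : ∀ D, d b ≤ D → D < d x → dueBy d Z D < slotsBelow T D) :
    Schedulable d T (insert b (Z.erase x)) := by
  refine schedulable_of_forall_dueBy_le fun D => ?_
  rw [dueBy_insert fun h => hb (mem_of_mem_erase h)]
  have herase := dueBy_erase_add (d := d) hx D
  have hle := hZ.dueBy_le D
  split_ifs at herase ⊢ with hbD hxD hxD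
  · omega
  · have := h D hbD (by omega)
    omega
  · omega
  · omega

theorem exists_greatest_tight_lt (Z : Finset P) (T : Set ℕ) {n : ℕ} (hn : 0 < n) :
    ∃ e < n, ¬ dueBy d Z e < slotsBelow T e ∧
      ∀ D, e < D → D < n → dueBy d Z D < slotsBelow T D := by
  let tight := fun D => ¬ dueBy d Z D < slotsBelow T D
  have := Nat.findGreatest_le (P := tight) (n - 1)
  refine ⟨Nat.findGreatest tight (n - 1), by omega,
    Nat.findGreatest_spec (P := tight) (Nat.zero_le _) (by simp [tight, slotsBelow]),
    fun D h₁ h₂ => by_contra (Nat.findGreatest_is_greatest h₁ (by omega))⟩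

/-- The first deadline `D ≥ d x` at which `B` is tight and the last deadline `e < d x` at which
`Y` is tight enclose a packet `b ∈ B \ Y` that can replace `x` in `Y` and be replaced by `x` in
`B`: otherwise `Y` would have more packets with deadline in `(e, D]` than `T'` has slots there. -/
theorem subset_of_forall_not_exchange {B Y : Finset P} (hT : T' ⊆ T)
    (hB : Schedulable d T B) (hY : Schedulable d T' Y)
    (hmax : ∀ x ∈ Y, x ∉ B → ¬ Schedulable d T (insert x B))
    (hswap : ∀ x ∈ Y, x ∉ B → ∀ b ∈ B, b ∉ Y → Schedulable d T (insert x (B.erase b)) →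
      ¬ Schedulable d T' (insert b (Y.erase x))) :
    Y ⊆ B := by
  intro x hxY
  by_contra hxB
  have hex : ∃ D, d x ≤ D ∧ ¬ dueBy d B D < slotsBelow T D := by
    by_contra! h
    exact hmax x hxY hxB (hB.insert_of_forall_dueBy_lt hxB h)
  obtain ⟨D, hxD, hBD, hBlt⟩ : ∃ D, d x ≤ D ∧ ¬ dueBy d B D < slotsBelow T D ∧
      ∀ D', d x ≤ D' → D' < D → dueBy d B D' < slotsBelow T D' :=
    ⟨Nat.find hex, (Nat.find_spec hex).1, (Nat.find_spec hex).2,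
      fun D' h₁ h₂ => by_contra fun h => Nat.find_min hex h₂ ⟨h₁, h⟩⟩
  have hdx : 0 < d x := by
    obtain ⟨σ, -, hσ⟩ := hY
    exact (Nat.zero_le _).trans_lt (hσ x hxY).2
  obtain ⟨e, hed, hYe, hYlt⟩ := exists_greatest_tight_lt (d := d) Y T' hdx
  have hBY : ∀ b ∈ B, e < d b → d b ≤ D → b ∈ Y := by
    intro b hbB heb hbD
    by_contra hbY
    exact hswap x hxY hxB b hbB hbY
      (hB.exchange_of_forall_dueBy_lt hbB hxB fun D' h₁ h₂ => hBlt D' h₁ (h₂.trans_le hbD))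
      (hY.exchange_of_forall_dueBy_lt hxY hbY fun D' h₁ h₂ => hYlt D' (heb.trans_le h₁) h₂)
  have hcount : #{z ∈ B | e < d z ∧ d z ≤ D} + 1 ≤ #{z ∈ Y | e < d z ∧ d z ≤ D} := by
    rw [← card_insert_of_notMem fun h => hxB (mem_filter.1 h).1]
    refine card_le_card (insert_subset_iff.2 ⟨mem_filter.2 ⟨hxY, hed, hxD⟩, fun b hb => ?_⟩)
    obtain ⟨hbB, hb⟩ := mem_filter.1 hb
    exact mem_filter.2 ⟨hBY b hbB hb.1 hb.2, hb⟩
  have heD : e ≤ D := by omega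
  have := dueBy_add (d := d) (Z := Y) heD
  have := dueBy_add (d := d) (Z := B) heD
  have := hB.dueBy_le e
  have := hY.dueBy_le D
  have := slotsBelow_add_le_of_subset hT heD
  omega

end Slots

section Weights

variable {P : Type*} (w : P → ℝ) (d : P → ℕ) (T : Set ℕ) (U : Finset P)

def IsMaxWeightSchedulable (Z : Finset P) : Prop :=
  Z ⊆ U ∧ Schedulable d T Z ∧ ∀ Z' ⊆ U, Schedulable d T Z' → ∑ j ∈ Z', w j ≤ ∑ j ∈ Z, w j

variable {w d T U}

theorem IsMaxWeightSchedulable.exists_subset {T' : Set ℕ} {B : Finset P}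
    (hw : ∀ j ∈ U, 0 < w j) (hT : T' ⊆ T) (hB : IsMaxWeightSchedulable w d T U B) :
    ∃ Y ⊆ B, IsMaxWeightSchedulable w d T' U Y := by
  obtain ⟨hBU, hB, hBmax⟩ := hB
  obtain ⟨Y, hYmem, hYmax⟩ := (U.powerset.filter (Schedulable d T')).exists_max_image
    (fun Z => toLex (∑ j ∈ Z, w j, #(Z ∩ B)))
    ⟨∅, mem_filter.2 ⟨empty_mem_powerset U, fun _ => 0, by simp, by simp⟩⟩
  rw [mem_filter, mem_powerset] at hYmem
  obtain ⟨hYU, hY⟩ := hYmem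
  have hYmax' : ∀ Z ⊆ U, Schedulable d T' Z →
      ∑ j ∈ Z, w j < ∑ j ∈ Y, w j ∨ ∑ j ∈ Z, w j = ∑ j ∈ Y, w j ∧ #(Z ∩ B) ≤ #(Y ∩ B) :=
    fun Z hZU hZ => Prod.Lex.toLex_le_toLex.1 (hYmax Z (mem_filter.2 ⟨mem_powerset.2 hZU, hZ⟩))
  refine ⟨Y, subset_of_forall_not_exchange hT hB hY (fun x hxY hxB hxBs => ?_)
    (fun x hxY hxB b hbB hbY hBs hYs => ?_), hYU, hY, fun Z hZU hZ => ?_⟩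
  · have := hBmax _ (insert_subset (hYU hxY) hBU) hxBs
    rw [sum_insert hxB] at this
    linarith [hw x (hYU hxY)]
  · have hwxb : w x ≤ w b := by
      have := hBmax _ (insert_subset (hYU hxY) ((erase_subset b B).trans hBU)) hBs
      rw [sum_insert fun h => hxB (mem_of_mem_erase h), sum_erase_eq_sub hbB] at this
      linarith
    have hinter : insert b (Y.erase x) ∩ B = insert b (Y ∩ B) := by
      rw [insert_inter_of_mem hbB, erase_inter, erase_eq_of_notMem fun h => hxB (mem_inter.1 h).2]
    rcases hYmax' _ (insert_subset (hBU hbB) ((erase_subset x Y).trans hYU)) hYs with h | ⟨-, h⟩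
    · rw [sum_insert fun h => hbY (mem_of_mem_erase h), sum_erase_eq_sub hxY] at h
      linarith
    · rw [hinter, card_insert_of_notMem fun h => hbY (mem_inter.1 h).1] at h
      omega
  · exact (hYmax' Z hZU hZ).elim le_of_lt fun h => h.1.le

end Weights

section Schedules

variable {P : Type*} {r d : P → ℕ} {t : ℕ} {A : Set P} {S : ℕ → Option P}

/-- The slots from `t` on that `S` leaves to packets released by `t`. -/
def freeSlots (r : P → ℕ) (t : ℕ) (S : ℕ → Option P) : Set ℕ :=
  {s | t ≤ s ∧ ∀ j, S s = some j → r j ≤ t}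

theorem freeSlots_subset_Ici : freeSlots r t S ⊆ Set.Ici t := fun _ hs => hs.1

theorem freeSlots_none : freeSlots r t (fun _ => (none : Option P)) = Set.Ici t := by
  ext s
  simp [freeSlots]

noncomputable def occursSet [Fintype P] (S : ℕ → Option P) : Finset P := {j | Occurs S j}

theorem mem_occursSet [Fintype P] {j : P} : j ∈ occursSet S ↔ Occurs S j := by
  simp [occursSet]

theorem schedWeight_eq_sum [Fintype P] (w : P → ℝ) (S : ℕ → Option P) :
    schedWeight w S = ∑ j ∈ occursSet S, w j := by
  rw [occursSet, sum_filter]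
  rfl

theorem FeasibleSchedule.le_of_eq_some (hS : FeasibleSchedule r d t A S) {s : ℕ} {j : P}
    (h : S s = some j) : t ≤ s := by
  by_contra hs
  simp [hS.1 s (by omega)] at h

theorem FeasibleSchedule.pending (hS : FeasibleSchedule r d t A S) {j : P} (hj : Occurs S j)
    (hr : r j ≤ t) : Pending r d t j := by
  obtain ⟨s, hs⟩ := hj
  exact ⟨hr, (hS.le_of_eq_some hs).trans_lt (hS.2.2 s j hs).2.2⟩

theorem FeasibleSchedule.schedulable [Fintype P] (hS : FeasibleSchedule r d t A S) :
    Schedulable d (freeSlots r t S) {j ∈ occursSet S | r j ≤ t} := by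
  have hslot : ∀ j ∈ occursSet S, S (Classical.epsilon fun s => S s = some j) = some j :=
    fun j hj => Classical.epsilon_spec (mem_occursSet.1 hj)
  refine ⟨fun j => Classical.epsilon fun s => S s = some j, fun a ha b hb hab => ?_,
    fun j hj => ?_⟩
  · have ha := hslot a (mem_filter.1 ha).1
    have hb := hslot b (mem_filter.1 hb).1
    exact Option.some_injective _ (ha.symm.trans ((congrArg S hab).trans hb))
  · obtain ⟨hjS, hrj⟩ := mem_filter.1 hj
    have hs := hslot j hjS
    refine ⟨⟨hS.le_of_eq_some hs, fun i hi => ?_⟩, (hS.2.2 _ _ hs).2.2⟩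
    rwa [← Option.some_injective _ (hs.symm.trans hi)]

noncomputable def reschedule (r : P → ℕ) (t : ℕ) (S : ℕ → Option P) (Z : Finset P)
    (σ : P → ℕ) (s : ℕ) : Option P :=
  if h : ∃ z ∈ Z, σ z = s then some h.choose else (S s).filter fun j => t < r j

theorem reschedule_eq_some_iff {Z : Finset P} {σ : P → ℕ} (hinj : Set.InjOn σ Z)
    (hfree : ∀ z ∈ Z, σ z ∈ freeSlots r t S) {s : ℕ} {j : P} :
    reschedule r t S Z σ s = some j ↔ (j ∈ Z ∧ σ j = s) ∨ (S s = some j ∧ t < r j) := by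
  unfold reschedule
  split_ifs with h
  · obtain ⟨hz, hzs⟩ := h.choose_spec
    constructor
    · rintro ⟨⟩
      exact Or.inl ⟨hz, hzs⟩
    · rintro (⟨hj, hjs⟩ | ⟨hSs, hr⟩)
      · exact congrArg some (hinj hz hj (hzs.trans hjs.symm))
      · exact absurd ((hfree _ hz).2 j (by rw [hzs]; exact hSs)) (not_le.2 hr)
  · have hZs : ¬ (j ∈ Z ∧ σ j = s) := fun ⟨hj, hjs⟩ => h ⟨j, hj, hjs⟩
    simp [Option.filter_eq_some_iff, hZs]

theorem FeasibleSchedule.exists_occursSet_eq [Fintype P] (hS : FeasibleSchedule r d t A S)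
    {Z : Finset P} (hZA : ∀ z ∈ Z, z ∈ A) (hZr : ∀ z ∈ Z, r z ≤ t)
    (hZ : Schedulable d (freeSlots r t S) Z) :
    ∃ S', FeasibleSchedule r d t A S' ∧ occursSet S' = Z ∪ {j ∈ occursSet S | t < r j} := by
  obtain ⟨σ, hinj, hσ⟩ := hZ
  have key := fun {s j} =>
    reschedule_eq_some_iff (s := s) (j := j) hinj fun z hz => (hσ z hz).1
  refine ⟨reschedule r t S Z σ, ⟨fun s hs => ?_, fun s₁ s₂ j h₁ h₂ => ?_, fun s j h => ?_⟩, ?_⟩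
  · refine Option.eq_none_iff_forall_ne_some.2 fun j hj => ?_
    rcases key.1 hj with ⟨hjZ, rfl⟩ | ⟨hSs, -⟩
    · exact absurd (hσ j hjZ).1.1 (not_le.2 hs)
    · exact absurd (hS.le_of_eq_some hSs) (not_le.2 hs)
  · rcases key.1 h₁ with ⟨hj, rfl⟩ | ⟨hS₁, hr⟩ <;> rcases key.1 h₂ with ⟨hj', rfl⟩ | ⟨hS₂, hr'⟩
    · rfl
    · exact absurd (hZr j hj) (not_le.2 hr')
    · exact absurd (hZr j hj') (not_le.2 hr)
    · exact hS.2.1 s₁ s₂ j hS₁ hS₂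
  · rcases key.1 h with ⟨hj, rfl⟩ | ⟨hSs, -⟩
    · exact ⟨hZA j hj, (hZr j hj).trans (hσ j hj).1.1, (hσ j hj).2⟩
    · exact hS.2.2 s j hSs
  · ext j
    simp only [mem_union, mem_filter, mem_occursSet, Occurs, key]
    constructor
    · rintro ⟨s, ⟨hj, -⟩ | ⟨hSs, hr⟩⟩
      exacts [Or.inl hj, Or.inr ⟨⟨s, hSs⟩, hr⟩]
    · rintro (hj | ⟨⟨s, hSs⟩, hr⟩)
      exacts [⟨σ j, Or.inl ⟨hj, rfl⟩⟩, ⟨s, Or.inr ⟨hSs, hr⟩⟩]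

theorem exists_feasibleSchedule_occursSet_eq [Fintype P] {Z : Finset P}
    (hZA : ∀ z ∈ Z, z ∈ A) (hZr : ∀ z ∈ Z, r z ≤ t) (hZ : Schedulable d (Set.Ici t) Z) :
    ∃ S, FeasibleSchedule r d t A S ∧ occursSet S = Z := by
  have hnone : FeasibleSchedule r d t A fun _ => none := ⟨fun _ _ => rfl, by simp, by simp⟩
  obtain ⟨S, hS, hocc⟩ := hnone.exists_occursSet_eq hZA hZr (freeSlots_none (P := P) ▸ hZ)
  exact ⟨S, hS, by simpa [occursSet, Occurs] using hocc⟩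

theorem FeasibleSchedule.filter_occursSet_subset [Fintype P] (hS : FeasibleSchedule r d t A S) :
    {j ∈ occursSet S | r j ≤ t} ⊆ ({j | Pending r d t j} : Finset P) := fun j hj => by
  obtain ⟨hjS, hjt⟩ := mem_filter.1 hj
  exact mem_filter.2 ⟨mem_univ j, hS.pending (mem_occursSet.1 hjS) hjt⟩

theorem OptimalSchedule.isMaxWeightSchedulable [Fintype P] {w : P → ℝ}
    (hS : OptimalSchedule r d w t (PendingSet r d t) S) :
    IsMaxWeightSchedulable w d (Set.Ici t) {j | Pending r d t j} (occursSet S) := by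
  obtain ⟨hSfeas, hSopt⟩ := hS
  have hpast : {j ∈ occursSet S | r j ≤ t} = occursSet S :=
    filter_true_of_mem fun j hj => by
      obtain ⟨s, hs⟩ := mem_occursSet.1 hj
      exact (hSfeas.2.2 s j hs).1.1
  refine ⟨hpast ▸ hSfeas.filter_occursSet_subset,
    (hpast ▸ hSfeas.schedulable).mono freeSlots_subset_Ici, fun Z hZU hZ => ?_⟩
  have hZP : ∀ z ∈ Z, Pending r d t z := fun z hz => (mem_filter.1 (hZU hz)).2
  obtain ⟨S', hS', rfl⟩ := exists_feasibleSchedule_occursSet_eq hZP (fun z hz => (hZP z hz).1) hZ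
  simpa only [schedWeight_eq_sum] using hSopt S' hS'

end Schedules

theorem stmt_0_general {P : Type*} [Fintype P] (r d : P → ℕ) (w : P → ℝ)
    (le : P → P → Prop)
    (hw : ∀ j, 0 < w j)
    (t : ℕ) (O C : ℕ → Option P)
    (hO : ObliviousSchedule r d w le t O)
    (hC : ClairvoyantSchedule r d w t C) :
    ∃ Cstar : ℕ → Option P, ClairvoyantSchedule r d w t Cstar ∧
      ∀ j, Occurs Cstar j → r j ≤ t → Occurs O j := by
  obtain ⟨hCfeas, hCopt⟩ := hC
  obtain ⟨Y, hYO, hYU, hY, hYmax⟩ := hO.1.isMaxWeightSchedulable.exists_subset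
    (T' := freeSlots r t C) (fun j _ => hw j) freeSlots_subset_Ici
  have hYP : ∀ y ∈ Y, Pending r d t y := fun y hy => (mem_filter.1 (hYU hy)).2
  obtain ⟨Cstar, hCstar, hocc⟩ :=
    hCfeas.exists_occursSet_eq (fun y hy => Or.inl (hYP y hy)) (fun y hy => (hYP y hy).1) hY
  refine ⟨Cstar, ⟨hCstar, fun S hS => (hCopt S hS).trans ?_⟩, fun j hj hjt => ?_⟩
  · have hYF : Disjoint Y {j ∈ occursSet C | t < r j} := disjoint_left.2 fun j hjY hjF =>
      absurd (hYP j hjY).1 (not_le.2 (mem_filter.1 hjF).2)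
    rw [schedWeight_eq_sum, schedWeight_eq_sum, hocc, sum_union hYF,
      ← sum_filter_add_sum_filter_not _ fun j => r j ≤ t]
    simp only [not_le]
    linarith [hYmax _ hCfeas.filter_occursSet_subset hCfeas.schedulable]
  · rcases mem_union.1 (hocc ▸ mem_occursSet.2 hj) with hjY | hjF
    · exact mem_occursSet.1 (hYO hjY)
    · exact absurd hjt (not_le.2 (mem_filter.1 hjF).2)

/-- For every step `t`, oblivious schedule `O` and clairvoyant schedule `C`,
there is a clairvoyant schedule `C*` such that every packet occurring in `C*` that is
released by `t` also occurs in `O`. -/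
theorem stmt_0 {P : Type*} [Fintype P] (r d : P → ℕ) (w : P → ℝ)
    (le : P → P → Prop)
    (hrd : ∀ j, r j < d j) (hw : ∀ j, 0 < w j)
    (hlin : IsLinearOrder P le) (hcomp : OrderCompatible r d w le)
    (t : ℕ) (O C : ℕ → Option P)
    (hO : ObliviousSchedule r d w le t O)
    (hC : ClairvoyantSchedule r d w t C) :
    ∃ Cstar : ℕ → Option P, ClairvoyantSchedule r d w t Cstar ∧
      ∀ j, Occurs Cstar j → r j ≤ t → Occurs O j :=
  stmt_0_general r d w le hw t O C hO hC
end

section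
/- Let O be an optimal feasible ⊴-schedule starting at step t over the set of packets pending at t, and let C be an optimal feasible schedule starting at t over the packets pending at t together with all packets released after t. If a packet j with r_j ≤ t occurs in C but not in O, then there exists a packet j' occurring in O but not in C with w_{j'} = w_j such that the packet set (C \ {j}) ∪ {j'} admits a feasible schedule starting at t whose weight equals the weight of C. -/
open Function Finset

section Schedules

variable {P : Type*} {r d : P → ℕ} {t : ℕ} {A : Set P} {S : ℕ → Option P}

theorem occurs_update_of_eq_none {s : ℕ} {p k : P} (hs : S s = none) :
    Occurs (update S s (some p)) k ↔ Occurs S k ∨ k = p := by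
  constructor
  · rintro ⟨u, hu⟩
    rcases eq_or_ne u s with rfl | hus
    · exact Or.inr (Option.some.inj (by simpa using hu)).symm
    · exact Or.inl ⟨u, by rwa [update_of_ne hus] at hu⟩
  · rintro (⟨u, hu⟩ | rfl)
    · have hus : u ≠ s := by rintro rfl; simp [hs] at hu
      exact ⟨u, by rwa [update_of_ne hus]⟩
    · exact ⟨s, by simp⟩

namespace FeasibleSchedule

theorem le_of_eq_some_s1 (hS : FeasibleSchedule r d t A S) {u : ℕ} {k : P} (h : S u = some k) :
    t ≤ u := by
  by_contra hu
  simp [hS.1 u (by omega)] at h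

theorem mem_of_eq_some (hS : FeasibleSchedule r d t A S) {u : ℕ} {k : P} (h : S u = some k) :
    k ∈ A :=
  (hS.2.2 u k h).1

theorem pending_of_eq_some (hS : FeasibleSchedule r d t A S) {u : ℕ} {k : P}
    (h : S u = some k) : Pending r d u k :=
  (hS.2.2 u k h).2

theorem eq_of_eq_some (hS : FeasibleSchedule r d t A S) {a b : ℕ} {k : P} (ha : S a = some k)
    (hb : S b = some k) : a = b :=
  hS.2.1 a b k ha hb

theorem occurs_update_none {s : ℕ} {p k : P} (hS : FeasibleSchedule r d t A S)
    (hs : S s = some p) : Occurs (update S s none) k ↔ Occurs S k ∧ k ≠ p := by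
  constructor
  · rintro ⟨u, hu⟩
    have hus : u ≠ s := by rintro rfl; simp at hu
    rw [update_of_ne hus] at hu
    exact ⟨⟨u, hu⟩, by rintro rfl; exact hus (hS.eq_of_eq_some hu hs)⟩
  · rintro ⟨⟨u, hu⟩, hkp⟩
    have hus : u ≠ s := by rintro rfl; exact hkp (Option.some.inj (hu.symm.trans hs))
    exact ⟨u, by rwa [update_of_ne hus]⟩

theorem occurs_update_some {s : ℕ} {p q k : P} (hS : FeasibleSchedule r d t A S)
    (hs : S s = some q) : Occurs (update S s (some p)) k ↔ (Occurs S k ∧ k ≠ q) ∨ k = p := by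
  rw [← update_idem (β := fun _ => Option P) none, occurs_update_of_eq_none (update_self ..),
    hS.occurs_update_none hs]

theorem restrict (hS : FeasibleSchedule r d t A S) {B : Set P} (hB : ∀ k, Occurs S k → k ∈ B) :
    FeasibleSchedule r d t B S :=
  ⟨hS.1, hS.2.1, fun u k hk => ⟨hB k ⟨u, hk⟩, hS.2.2 u k hk |>.2⟩⟩

theorem update_none (hS : FeasibleSchedule r d t A S) (s : ℕ) :
    FeasibleSchedule r d t A (update S s none) := by
  refine ⟨fun u hu => ?_, fun a b k ha hb => ?_, fun u k hk => ?_⟩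
  · rcases eq_or_ne u s with rfl | hus
    · simp
    · rw [update_of_ne hus]; exact hS.1 u hu
  all_goals
    have hne : ∀ {u}, update S s none u = some k → S u = some k := fun {u} hu => by
      rcases eq_or_ne u s with rfl | hus
      · simp at hu
      · rwa [update_of_ne hus] at hu
  · exact hS.eq_of_eq_some (hne ha) (hne hb)
  · exact hS.2.2 u k (hne hk)

theorem update_some (hS : FeasibleSchedule r d t A S) {s : ℕ} {p : P} (hts : t ≤ s)
    (hp : p ∈ A) (hps : Pending r d s p) (hpS : ¬ Occurs S p) :
    FeasibleSchedule r d t A (update S s (some p)) := by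
  have hcases : ∀ {u k}, update S s (some p) u = some k → (u = s ∧ k = p) ∨ S u = some k :=
    fun {u k} hu => by
      rcases eq_or_ne u s with rfl | hus
      · exact Or.inl ⟨rfl, (Option.some.inj (by simpa using hu)).symm⟩
      · exact Or.inr (by rwa [update_of_ne hus] at hu)
  refine ⟨fun u hu => ?_, fun a b k ha hb => ?_, fun u k hk => ?_⟩
  · rw [update_of_ne (by omega)]; exact hS.1 u hu
  · rcases hcases ha with ⟨rfl, rfl⟩ | hSa <;> rcases hcases hb with ⟨rfl, hkp⟩ | hSb
    · rfl
    · exact absurd ⟨b, hSb⟩ hpS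
    · exact absurd ⟨a, hkp ▸ hSa⟩ hpS
    · exact hS.eq_of_eq_some hSa hSb
  · rcases hcases hk with ⟨rfl, rfl⟩ | hk
    · exact ⟨hp, hps⟩
    · exact hS.2.2 u k hk

end FeasibleSchedule

open Classical in
theorem schedWeight_eq_add_of_occurs_iff [Fintype P] (w : P → ℝ) {S' : ℕ → Option P} {b : P}
    (hb : ¬ Occurs S' b) (h : ∀ k, Occurs S k ↔ Occurs S' k ∨ k = b) :
    schedWeight w S = schedWeight w S' + w b := by
  unfold schedWeight
  rw [← sum_ite_eq' univ b w |>.trans (if_pos (mem_univ b)),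
    ← sum_add_distrib]
  refine sum_congr rfl fun k _ => ?_
  by_cases hk : k = b
  · subst hk; simp [hb, (h k).2 (Or.inr rfl)]
  · simp [h k, hk]

end Schedules

theorem card_filter_eq_lt {α : Type*} [DecidableEq α] {f g h : ℕ → α} {n s : ℕ}
    (himp : ∀ u, g u = h u → f u = h u) (hs : s < n) (hfs : f s = h s) (hgs : g s ≠ h s) :
    #{u ∈ range n | g u = h u} < #{u ∈ range n | f u = h u} := by
  refine card_lt_card ((ssubset_iff_of_subset fun u hu => ?_).2 ⟨s, ?_, ?_⟩)
  · simp only [mem_filter] at hu ⊢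
    exact ⟨hu.1, himp u hu.2⟩
  · simpa using ⟨hs, hfs⟩
  · simpa using fun _ => hgs

section OptimalSchedules

variable {P : Type*} {r d : P → ℕ} {t : ℕ} {A : Set P} {O : ℕ → Option P} {j : P}

theorem OptimalSchedule.exists_eq_some_of_not_occurs [Fintype P] {w : P → ℝ}
    (hO : OptimalSchedule r d w t A O) (hj : j ∈ A) (hjO : ¬ Occurs O j) (hwj : 0 < w j)
    {s : ℕ} (hts : t ≤ s) (hjs : Pending r d s j) : ∃ p, O s = some p := by
  by_contra! hfree
  have hOs : O s = none := Option.eq_none_iff_forall_ne_some.2 hfree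
  have hgain := schedWeight_eq_add_of_occurs_iff w hjO fun k =>
    occurs_update_of_eq_none (p := j) (k := k) hOs
  have := hO.2 _ (hO.1.update_some hts hj hjs hjO)
  linarith

theorem TriSchedule.deadline_le {le : P → P → Prop} (hO : TriSchedule r d le A O)
    (hanti : ∀ a b, le a b → le b a → a = b) (hdl : ∀ i k, d i < d k → le i k)
    (hj : j ∈ A) (hjO : ¬ Occurs O j) {s : ℕ} {p : P} (hs : O s = some p)
    (hjs : Pending r d s j) : d p ≤ d j := by
  by_contra! hlt
  have hpj : p = j := hanti p j (hO s p hs j hj hjs fun u _ hu => hjO ⟨u, hu⟩) (hdl j p hlt)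
  exact hjO ⟨s, hpj ▸ hs⟩

end OptimalSchedules

/-- One stage of the augmenting path from `C` to `O`: `S` is `C` without `j`, rearranged so that
slot `s` is free, and `T` is `O` with its packet `p` in slot `s` traded for `j`. The slots where
`S` differs from `C` are the path slots visited so far; there `S` agrees with `O` (except at the
free slot `s`), and everywhere else `T` agrees with `O`. -/
structure IsExchangeState {P : Type*} (r d : P → ℕ) (t : ℕ) (O C : ℕ → Option P) (j : P)
    (S T : ℕ → Option P) (s : ℕ) (p : P) : Prop where
  feasible_S : FeasibleSchedule r d t (ClairSet r d t) S
  occurs_S : ∀ k, Occurs S k ↔ Occurs C k ∧ k ≠ j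
  S_slot_eq_none : S s = none
  O_slot_eq : O s = some p
  slot_lt : s < d j
  feasible_T : FeasibleSchedule r d t (PendingSet r d t) T
  occurs_T : ∀ k, Occurs T k ↔ (Occurs O k ∧ k ≠ p) ∨ k = j
  S_eq_O_of_ne_C : ∀ u, S u ≠ C u → u = s ∨ S u = O u
  T_eq_O_of_eq_C : ∀ u, S u = C u → T u = O u

def IsExchangeWitness {P : Type*} [Fintype P] (r d : P → ℕ) (w : P → ℝ) (t : ℕ)
    (O C : ℕ → Option P) (j j' : P) : Prop :=
  Occurs O j' ∧ ¬ Occurs C j' ∧ w j' = w j ∧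
    ∃ S : ℕ → Option P,
      FeasibleSchedule r d t (({k | Occurs C k} \ {j}) ∪ {j'}) S ∧
      (∀ k, k ∈ (({k | Occurs C k} \ {j}) ∪ {j'} : Set P) → Occurs S k) ∧
      schedWeight w S = schedWeight w C

namespace IsExchangeState

variable {P : Type*} {r d : P → ℕ} {t : ℕ} {O C S T : ℕ → Option P} {j p : P} {s : ℕ}

theorem init (hO : FeasibleSchedule r d t (PendingSet r d t) O)
    (hC : FeasibleSchedule r d t (ClairSet r d t) C) (hjr : r j ≤ t) (hjO : ¬ Occurs O j)
    (hCs : C s = some j) (hOs : O s = some p) :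
    IsExchangeState r d t O C j (update C s none) (update O s (some j)) s p := by
  have hts := hC.le_of_eq_some_s1 hCs
  have hsd := (hC.pending_of_eq_some hCs).2
  refine ⟨hC.update_none s, fun k => hC.occurs_update_none hCs, update_self .., hOs, hsd,
    hO.update_some hts ⟨hjr, hts.trans_lt hsd⟩ ⟨hjr.trans hts, hsd⟩ hjO,
    fun k => hO.occurs_update_some hOs, fun u hu => ?_, fun u hu => ?_⟩
  · exact Or.inl (by_contra fun hus => hu (update_of_ne hus ..))
  · have hus : u ≠ s := by rintro rfl; simp [hCs] at hu
    exact update_of_ne hus ..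

theorem occurs_O (st : IsExchangeState r d t O C j S T s p) : Occurs O p :=
  ⟨s, st.O_slot_eq⟩

theorem ne_of_not_occurs (st : IsExchangeState r d t O C j S T s p) (hjO : ¬ Occurs O j) :
    p ≠ j := by
  rintro rfl; exact hjO st.occurs_O

/-- `p` has not been moved yet, so the slot where `S` sends it lies off the path. -/
theorem exists_slot_of_occurs (st : IsExchangeState r d t O C j S T s p)
    (hO : FeasibleSchedule r d t (PendingSet r d t) O) (hjO : ¬ Occurs O j) (hpC : Occurs C p) :
    ∃ s', S s' = some p ∧ S s' = C s' ∧ s' ≠ s := by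
  obtain ⟨s', hs'⟩ := (st.occurs_S p).2 ⟨hpC, st.ne_of_not_occurs hjO⟩
  have hs's : s' ≠ s := by rintro rfl; simp [st.S_slot_eq_none] at hs'
  refine ⟨s', hs', by_contra fun hne => ?_, hs's⟩
  rcases st.S_eq_O_of_ne_C s' hne with h | h
  · exact hs's h
  · exact hs's (hO.eq_of_eq_some (h ▸ hs') st.O_slot_eq)

theorem eq_C_of_move_eq_C (st : IsExchangeState r d t O C j S T s p)
    (hC : FeasibleSchedule r d t (ClairSet r d t) C) {s' u : ℕ} (hs' : S s' = some p)
    (hSCs' : S s' = C s') (hs's : s' ≠ s) (hu : update (update S s' none) s (some p) u = C u) :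
    u ≠ s' ∧ S u = C u := by
  have hus' : u ≠ s' := by rintro rfl; simp [← hSCs', hs's, hs'] at hu
  have hus : u ≠ s := by
    rintro rfl
    exact hs's (hC.eq_of_eq_some (hSCs' ▸ hs') (by simpa using hu.symm))
  exact ⟨hus', by rwa [update_of_ne hus, update_of_ne hus'] at hu⟩

theorem step (st : IsExchangeState r d t O C j S T s p)
    (hO : FeasibleSchedule r d t (PendingSet r d t) O)
    (hC : FeasibleSchedule r d t (ClairSet r d t) C) (hjO : ¬ Occurs O j)
    {s' : ℕ} {p' : P} (hs' : S s' = some p) (hSCs' : S s' = C s') (hs's : s' ≠ s)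
    (hs'd : s' < d j) (hp' : O s' = some p') :
    IsExchangeState r d t O C j (update (update S s' none) s (some p)) (update T s' (some p))
      s' p' := by
  have hOs := st.O_slot_eq
  have hp'p : p' ≠ p := by rintro rfl; exact hs's (hO.eq_of_eq_some hp' hOs)
  have hp'j : p' ≠ j := by rintro rfl; exact hjO ⟨s', hp'⟩
  have hpT : ¬ Occurs T p := by simp [st.occurs_T, st.ne_of_not_occurs hjO]
  have hS's : update S s' none s = none := by rw [update_of_ne hs's.symm, st.S_slot_eq_none]
  refine ⟨(st.feasible_S.update_none s').update_some (hO.le_of_eq_some_s1 hOs)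
      (Or.inl (hO.mem_of_eq_some hOs)) (hO.pending_of_eq_some hOs)
      (by simp [st.feasible_S.occurs_update_none hs']), fun k => ?_, by simp [hs's],
    hp', hs'd, st.feasible_T.update_some (st.feasible_S.le_of_eq_some_s1 hs')
      (hO.mem_of_eq_some hOs) (st.feasible_S.pending_of_eq_some hs') hpT, fun k => ?_,
    fun u hu => ?_, fun u hu => ?_⟩
  · rw [occurs_update_of_eq_none hS's, st.feasible_S.occurs_update_none hs', ← st.occurs_S]
    by_cases hk : k = p
    · subst hk; simpa using ⟨s', hs'⟩
    · simp [hk]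
  · rw [st.feasible_T.occurs_update_some (st.T_eq_O_of_eq_C s' hSCs' ▸ hp'), st.occurs_T]
    by_cases hk : k = p
    · subst hk; simp [st.occurs_O, hp'p.symm]
    · by_cases hkj : k = j <;> simp [hk, hkj, hp'j.symm]
  · by_cases h₁ : u = s'
    · exact Or.inl h₁
    by_cases h₂ : u = s
    · subst h₂; simp [hOs]
    rw [update_of_ne h₂, update_of_ne h₁] at hu ⊢
    exact Or.inr ((st.S_eq_O_of_ne_C u hu).resolve_left h₂)
  · obtain ⟨hus', hSCu⟩ := st.eq_C_of_move_eq_C hC hs' hSCs' hs's hu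
    rw [update_of_ne hus']
    exact st.T_eq_O_of_eq_C u hSCu

theorem isExchangeWitness_of_not_occurs [Fintype P] {w : P → ℝ}
    (st : IsExchangeState r d t O C j S T s p)
    (hO : OptimalSchedule r d w t (PendingSet r d t) O)
    (hC : OptimalSchedule r d w t (ClairSet r d t) C) (hjC : Occurs C j) (hjO : ¬ Occurs O j)
    (hpC : ¬ Occurs C p) : IsExchangeWitness r d w t O C j p := by
  have hpS : ¬ Occurs S p := fun h => hpC ((st.occurs_S p).1 h).1
  have hS₂ : FeasibleSchedule r d t (ClairSet r d t) (update S s (some p)) :=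
    st.feasible_S.update_some (hO.1.le_of_eq_some_s1 st.O_slot_eq)
      (Or.inl (hO.1.mem_of_eq_some st.O_slot_eq)) (hO.1.pending_of_eq_some st.O_slot_eq) hpS
  have hocc₂ : ∀ k, Occurs (update S s (some p)) k ↔ (Occurs C k ∧ k ≠ j) ∨ k = p := fun k => by
    rw [occurs_update_of_eq_none st.S_slot_eq_none, st.occurs_S]
  have hOp : ∀ k, Occurs (update O s none) k ↔ Occurs O k ∧ k ≠ p := fun k =>
    hO.1.occurs_update_none st.O_slot_eq
  -- `C - j + p` and `O - p + j` are feasible, so optimality of `C` and `O` gives `w p = w j`.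
  have hwC : schedWeight w C = schedWeight w S + w j :=
    schedWeight_eq_add_of_occurs_iff w (by simp [st.occurs_S]) fun k => by
      by_cases hk : k = j <;> simp [st.occurs_S, hk, hjC]
  have hwS₂ : schedWeight w (update S s (some p)) = schedWeight w S + w p :=
    schedWeight_eq_add_of_occurs_iff w hpS fun k => occurs_update_of_eq_none st.S_slot_eq_none
  have hwO : schedWeight w O = schedWeight w (update O s none) + w p :=
    schedWeight_eq_add_of_occurs_iff w (by simp [hOp]) fun k => by
      by_cases hk : k = p <;> simp [hOp, hk, st.occurs_O]
  have hwT : schedWeight w T = schedWeight w (update O s none) + w j :=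
    schedWeight_eq_add_of_occurs_iff w (by simp [hOp, hjO]) fun k => by
      rw [st.occurs_T, hOp]
  have hC₂ := hC.2 _ hS₂
  have hOT := hO.2 _ st.feasible_T
  refine ⟨st.occurs_O, hpC, by linarith, update S s (some p),
    hS₂.restrict fun k hk => ?_, fun k hk => (hocc₂ k).2 ?_, by linarith⟩
  · simpa [hocc₂, or_comm] using hk
  · simpa [or_comm] using hk

theorem exists_isExchangeWitness [Fintype P] {w : P → ℝ}
    (st : IsExchangeState r d t O C j S T s p)
    (hO : OptimalSchedule r d w t (PendingSet r d t) O)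
    (hC : OptimalSchedule r d w t (ClairSet r d t) C) (hjC : Occurs C j) (hjO : ¬ Occurs O j)
    (hfull : ∀ u, t ≤ u → u < d j → ∃ q, O u = some q)
    (hdl : ∀ u q, u < d j → O u = some q → d q ≤ d j) :
    ∃ j', IsExchangeWitness r d w t O C j j' := by
  classical
  induction hn : #{u ∈ range (d j) | S u = C u} using Nat.strong_induction_on
    generalizing S T s p with
  | _ n ih =>
  by_cases hpC : Occurs C p
  · obtain ⟨s', hs', hSCs', hs's⟩ := st.exists_slot_of_occurs hO.1 hjO hpC
    have hs'd : s' < d j :=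
      (st.feasible_S.pending_of_eq_some hs').2.trans_le (hdl s p st.slot_lt st.O_slot_eq)
    obtain ⟨p', hp'⟩ := hfull s' (st.feasible_S.le_of_eq_some_s1 hs') hs'd
    -- the slot `s'` leaves the set where `S` agrees with `C`
    have hlt := card_filter_eq_lt (f := S) (h := C)
      (fun u hu => (st.eq_C_of_move_eq_C hC.1 hs' hSCs' hs's hu).2) hs'd hSCs'
      (by simp [hs's, ← hSCs', hs'])
    exact ih _ (hn ▸ hlt) (st.step hO.1 hC.1 hjO hs' hSCs' hs's hs'd hp') rfl
  · exact ⟨p, st.isExchangeWitness_of_not_occurs hO hC hjC hjO hpC⟩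

end IsExchangeState

theorem stmt_1_general {P : Type*} [Fintype P] (r d : P → ℕ) (w : P → ℝ)
    (le : P → P → Prop)
    (hw : ∀ j, 0 < w j)
    (hlin : IsLinearOrder P le) (hcomp : OrderCompatible r d w le)
    (t : ℕ) (O C : ℕ → Option P)
    (hO : OptimalSchedule r d w t (PendingSet r d t) O)
    (hOtri : TriSchedule r d le (PendingSet r d t) O)
    (hC : OptimalSchedule r d w t (ClairSet r d t) C)
    (j : P) (hjr : r j ≤ t) (hjC : Occurs C j) (hjO : ¬ Occurs O j) :
    ∃ j', Occurs O j' ∧ ¬ Occurs C j' ∧ w j' = w j ∧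
      ∃ S : ℕ → Option P,
        FeasibleSchedule r d t (({k | Occurs C k} \ {j}) ∪ {j'}) S ∧
        (∀ k, k ∈ (({k | Occurs C k} \ {j}) ∪ {j'} : Set P) → Occurs S k) ∧
        schedWeight w S = schedWeight w C := by
  obtain ⟨tj, hCtj⟩ := hjC
  have htj : t ≤ tj := hC.1.le_of_eq_some_s1 hCtj
  have htjd : tj < d j := (hC.1.pending_of_eq_some hCtj).2
  have hj : j ∈ PendingSet r d t := ⟨hjr, htj.trans_lt htjd⟩
  have hfull : ∀ u, t ≤ u → u < d j → ∃ q, O u = some q := fun u htu hud =>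
    hO.exists_eq_some_of_not_occurs hj hjO (hw j) htu ⟨hjr.trans htu, hud⟩
  have hdl : ∀ u q, u < d j → O u = some q → d q ≤ d j := fun u q hud hOu =>
    hOtri.deadline_le hlin.antisymm hcomp.1 hj hjO hOu ⟨hjr.trans (hO.1.le_of_eq_some_s1 hOu), hud⟩
  obtain ⟨p, hp⟩ := hfull tj htj htjd
  exact (IsExchangeState.init hO.1 hC.1 hjr hjO hCtj hp).exists_isExchangeWitness hO hC
    ⟨tj, hCtj⟩ hjO hfull hdl

/-- If a packet `j` released by `t` occurs in the clairvoyant schedule `C`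
but not in the oblivious schedule `O`, there is a packet `j'` in `O` but not in `C`
of the same weight such that the packet set `(C \ {j}) ∪ {j'}` admits a feasible
schedule starting at `t` whose weight equals the weight of `C`. -/
theorem stmt_1 {P : Type*} [Fintype P] (r d : P → ℕ) (w : P → ℝ)
    (le : P → P → Prop)
    (hrd : ∀ j, r j < d j) (hw : ∀ j, 0 < w j)
    (hlin : IsLinearOrder P le) (hcomp : OrderCompatible r d w le)
    (t : ℕ) (O C : ℕ → Option P)
    (hO : OptimalSchedule r d w t (PendingSet r d t) O)
    (hOtri : TriSchedule r d le (PendingSet r d t) O)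
    (hC : OptimalSchedule r d w t (ClairSet r d t) C)
    (j : P) (hjr : r j ≤ t) (hjC : Occurs C j) (hjO : ¬ Occurs O j) :
    ∃ j', Occurs O j' ∧ ¬ Occurs C j' ∧ w j' = w j ∧
      ∃ S : ℕ → Option P,
        FeasibleSchedule r d t (({k | Occurs C k} \ {j}) ∪ {j'}) S ∧
        (∀ k, k ∈ (({k | Occurs C k} \ {j}) ∪ {j'} : Set P) → Occurs S k) ∧
        schedWeight w S = schedWeight w C :=
  stmt_1_general r d w le hw hlin hcomp t O C hO hOtri hC j hjr hjC hjO
end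

section
/- Let S be a feasible schedule starting at step t whose domain is the consecutive block {t, t+1, …, t+s−1}, and let 1 ≤ l ≤ s−1. Suppose that r_{S(t+l)} ≤ t (the packet scheduled at step t+l is already released at t) and that for every 0 ≤ i < l the packet S(t+i) has slack, i.e. d_{S(t+i)} > t+i+1. Then the schedule S' defined by S'(t) = S(t+l), S'(t+i) = S(t+i−1) for 1 ≤ i ≤ l, and S'(t') = S(t') for t' > t+l, is a feasible schedule scheduling the same set of packets as S. -/
/-- `S ∘ moveToFront t l` is `S` with step `t + l` rotated to the front of the block
`t, …, t + l`; it is a bijection of `ℕ`, so only the release/deadline windows need checking. -/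
def moveToFront (t l : ℕ) (t' : ℕ) : ℕ :=
  if t' = t then t + l else if t < t' ∧ t' ≤ t + l then t' - 1 else t'

lemma moveToFront_injective (t l : ℕ) : Function.Injective (moveToFront t l) := by
  intro t₁ t₂ h
  simp only [moveToFront] at h
  split_ifs at h <;> omega

lemma moveToFront_of_lt {t l t' : ℕ} (ht' : t' < t) : moveToFront t l t' = t' := by
  simp only [moveToFront]
  split_ifs <;> omega

lemma moveToFront_surjective (t l : ℕ) : Function.Surjective (moveToFront t l) := by
  intro u
  by_cases hlast : u = t + l
  · exact ⟨t, by simp [moveToFront, hlast]⟩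
  by_cases hblock : t ≤ u ∧ u < t + l
  · exact ⟨u + 1, by simp only [moveToFront]; split_ifs <;> omega⟩
  · exact ⟨u, by simp only [moveToFront]; split_ifs <;> omega⟩

lemma occurs_comp_iff {P : Type*} {S : ℕ → Option P} {σ : ℕ → ℕ}
    (hσ : Function.Surjective σ) (j : P) : Occurs (S ∘ σ) j ↔ Occurs S j := by
  constructor
  · rintro ⟨u, hu⟩
    exact ⟨σ u, hu⟩
  · rintro ⟨u, hu⟩
    obtain ⟨v, rfl⟩ := hσ u
    exact ⟨v, hu⟩

lemma FeasibleSchedule.comp {P : Type*} {r d : P → ℕ} {t : ℕ} {A : Set P}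
    {S : ℕ → Option P} {σ : ℕ → ℕ} (hS : FeasibleSchedule r d t A S)
    (hσ : Function.Injective σ) (hfix : ∀ t' < t, σ t' = t')
    (hwindow : ∀ t' j, S (σ t') = some j → r j ≤ t' ∧ t' < d j) :
    FeasibleSchedule r d t A (S ∘ σ) := by
  obtain ⟨hbefore, hinj, hfeas⟩ := hS
  refine ⟨fun t' ht' => ?_, fun t₁ t₂ j h₁ h₂ => hσ (hinj _ _ j h₁ h₂),
    fun t' j h => ⟨(hfeas _ _ h).1, hwindow t' j h⟩⟩
  simp only [Function.comp_apply, hfix t' ht']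
  exact hbefore t' ht'

lemma moveToFront_window {P : Type*} {r d : P → ℕ} {t : ℕ} {A : Set P} {S : ℕ → Option P}
    (hS : FeasibleSchedule r d t A S) {l : ℕ}
    (hrel : ∀ j, S (t + l) = some j → r j ≤ t)
    (hslack : ∀ i < l, ∀ j, S (t + i) = some j → t + i + 1 < d j)
    (t' : ℕ) (j : P) (h : S (moveToFront t l t') = some j) : r j ≤ t' ∧ t' < d j := by
  obtain ⟨-, hr, hd⟩ := hS.2.2 _ _ h
  simp only [moveToFront] at h hr hd
  split_ifs at h hr hd with hfront hblock
  · exact ⟨hfront ▸ hrel j h, by omega⟩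
  · have hprev : t + (t' - 1 - t) = t' - 1 := by omega
    have := hslack (t' - 1 - t) (by omega) j (by rwa [hprev])
    omega
  · exact ⟨hr, hd⟩

theorem stmt_7_general {P : Type*} (r d : P → ℕ)
    (t : ℕ) (A : Set P) (S : ℕ → Option P)
    (hS : FeasibleSchedule r d t A S)
    (l : ℕ)
    (hrel : ∀ j, S (t + l) = some j → r j ≤ t)
    (hslack : ∀ i < l, ∀ j, S (t + i) = some j → t + i + 1 < d j) :
    FeasibleSchedule r d t A
      (fun t' => if t' = t then S (t + l)
        else if t < t' ∧ t' ≤ t + l then S (t' - 1) else S t') ∧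
    ∀ j, Occurs
      (fun t' => if t' = t then S (t + l)
        else if t < t' ∧ t' ≤ t + l then S (t' - 1) else S t') j ↔ Occurs S j := by
  have hS' : (fun t' => if t' = t then S (t + l)
      else if t < t' ∧ t' ≤ t + l then S (t' - 1) else S t') = S ∘ moveToFront t l := by
    funext t'
    simp only [Function.comp_apply, moveToFront]
    split_ifs <;> rfl
  rw [hS']
  exact ⟨hS.comp (moveToFront_injective t l) (fun _ => moveToFront_of_lt) (moveToFront_window hS hrel hslack),
    occurs_comp_iff (moveToFront_surjective t l)⟩

/-- Moving a packet `S(t+l)`, already released at `t` , to the front of a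
feasible schedule `S` with domain `{t, …, t+s-1}` — shifting `S(t), …, S(t+l-1)` one
step later — preserves feasibility, provided all of `S(t), …, S(t+l-1)` have slack. -/
theorem stmt_7 {P : Type*} (r d : P → ℕ)
    (hrd : ∀ j, r j < d j)
    (t s : ℕ) (A : Set P) (S : ℕ → Option P)
    (hS : FeasibleSchedule r d t A S)
    (hdom : ∀ t', (S t').isSome ↔ (t ≤ t' ∧ t' < t + s))
    (l : ℕ) (hl1 : 1 ≤ l) (hls : l ≤ s - 1)
    (hrel : ∀ j, S (t + l) = some j → r j ≤ t)
    (hslack : ∀ i < l, ∀ j, S (t + i) = some j → t + i + 1 < d j) :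
    FeasibleSchedule r d t A
      (fun t' => if t' = t then S (t + l)
        else if t < t' ∧ t' ≤ t + l then S (t' - 1) else S t') ∧
    ∀ j, Occurs
      (fun t' => if t' = t then S (t + l)
        else if t < t' ∧ t' ≤ t + l then S (t' - 1) else S t') j ↔ Occurs S j :=
  stmt_7_general r d t A S hS l hrel hslack
end

section
/- Let C_t be a clairvoyant schedule conforming with an oblivious schedule O_t, and let h be the ⊴-minimal packet among the maximum-weight packets occurring in O_t. If C_t(t) is defined, then C_t(t) ⊴ h. -/
/-!
The packet `C t` is released by step `t`, so by conformity it also occurs in `O`, hence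
weighs at most `w h`. If `h` came strictly before `C t` in `⊴`, conformity would make `h`
strictly lighter than `C t`.
-/

theorem FeasibleSchedule.release_le {P : Type*} {r d : P → ℕ} {t t' : ℕ} {A : Set P}
    {S : ℕ → Option P} {j : P} (hS : FeasibleSchedule r d t A S) (hj : S t' = some j) :
    r j ≤ t' :=
  (hS.2.2 t' j hj).2.1

theorem Conforms.occurs_of_eq_some {P : Type*} {r d : P → ℕ} {w : P → ℝ}
    {le : P → P → Prop} {t : ℕ} {A : Set P} {O C : ℕ → Option P} {j : P}
    (hconf : Conforms r d w le t O C) (hC : FeasibleSchedule r d t A C) (hj : C t = some j) :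
    Occurs O j :=
  hconf.2.1 j ⟨t, hj⟩ (hC.release_le hj)

theorem stmt_9_general {P : Type*} [Fintype P] (r d : P → ℕ) (w : P → ℝ)
    (le : P → P → Prop)
    (hlin : IsLinearOrder P le)
    (t : ℕ) (O C : ℕ → Option P)
    (hC : ClairvoyantSchedule r d w t C)
    (hconf : Conforms r d w le t O C)
    (h : P) (hhO : Occurs O h)
    (hhmax : ∀ k, Occurs O k → w k ≤ w h)
    (jt : P) (hjt : C t = some jt) :
    le jt h := by
  rcases hlin.total jt h with hle | hle
  · exact hle
  by_cases heq : h = jt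
  · exact heq ▸ hle
  have hjt_light : w jt ≤ w h := hhmax jt (hconf.occurs_of_eq_some hC.1 hjt)
  have hh_light : w h < w jt := hconf.2.2 jt hjt h hhO hle heq
  exact absurd hjt_light (not_le.2 hh_light)

/-- If the clairvoyant schedule `C` conforms with the oblivious schedule
`O` and `h` is the `⊴`-minimal among the heaviest packets occurring in `O`, then
whenever `C t` is defined, `C t ⊴ h`. -/
theorem stmt_9 {P : Type*} [Fintype P] (r d : P → ℕ) (w : P → ℝ)
    (le : P → P → Prop)
    (hrd : ∀ j, r j < d j) (hw : ∀ j, 0 < w j)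
    (hlin : IsLinearOrder P le) (hcomp : OrderCompatible r d w le)
    (t : ℕ) (O C : ℕ → Option P)
    (hO : ObliviousSchedule r d w le t O)
    (hC : ClairvoyantSchedule r d w t C)
    (hconf : Conforms r d w le t O C)
    (h : P) (hhO : Occurs O h)
    (hhmax : ∀ k, Occurs O k → w k ≤ w h)
    (hhmin : ∀ k, Occurs O k → w k = w h → le h k)
    (jt : P) (hjt : C t = some jt) :
    le jt h :=
  stmt_9_general r d w le hlin t O C hC hconf h hhO hhmax jt hjt
end

section
/- For all real numbers w_e and w_h with 0 < w_e ≤ w_h, (w_e/w_h)·w_e + (1 − w_e/w_h)·(w_e + w_h) = w_h; consequently, w_h ≤ (4/3)·((w_e/w_h)·w_e + (1 − w_e/w_h)·w_h), i.e. the per-step ratio of the adversary's expected gain to RG's expected gain is at most 4/3. -/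
/-! Transmitting `h` with probability `1 - w_e/w_h` costs the adversary exactly the `w_e` it
loses otherwise, so its expected gain is `w_h`. RG's expected gain is
`(w_e² - w_e w_h + w_h²) / w_h`, and `4 (w_e² - w_e w_h + w_h²) - 3 w_h² = (2 w_e - w_h)² ≥ 0`. -/

theorem adversary_gain_eq {we wh : ℝ} (hwh : wh ≠ 0) :
    (we / wh) * we + (1 - we / wh) * (we + wh) = wh := by
  field_simp
  ring

theorem rg_gain_mul_eq {we wh : ℝ} (hwh : wh ≠ 0) :
    ((we / wh) * we + (1 - we / wh) * wh) * wh = we ^ 2 - we * wh + wh ^ 2 := by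
  field_simp
  ring

theorem le_four_thirds_mul_rg_gain {we wh : ℝ} (hwh : 0 < wh) :
    wh ≤ (4 / 3) * ((we / wh) * we + (1 - we / wh) * wh) := by
  have hgain := rg_gain_mul_eq (we := we) hwh.ne'
  refine le_of_mul_le_mul_right ?_ hwh
  nlinarith [sq_nonneg (2 * we - wh)]

/-- For `0 < w_e ≤ w_h`, the adversary's expected per-step gain
`(w_e/w_h)·w_e + (1 − w_e/w_h)·(w_e + w_h)` equals `w_h`, and consequently it is
at most `4/3` times RG's expected gain `(w_e/w_h)·w_e + (1 − w_e/w_h)·w_h`. -/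
theorem stmt_12 (we wh : ℝ) (hwe : 0 < we) (hweh : we ≤ wh) :
    (we / wh) * we + (1 - we / wh) * (we + wh) = wh ∧
    wh ≤ (4 / 3) * ((we / wh) * we + (1 - we / wh) * wh) := by
  have hwh : 0 < wh := hwe.trans_le hweh
  exact ⟨adversary_gain_eq hwh.ne', le_four_thirds_mul_rg_gain hwh⟩
end
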